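/- Let (Ξ, Σ, μ) be a complete finite measure space, p ≥ 1, Z̃ a separable Banach space, K ⊆ Z̃ closed nonempty, and φ ∈ L^p(Ξ, μ; Z̃) with φ(ξ) ∈ K μ-a.e. Then the set-valued maps ξ ⇝ T_K(φ(ξ)) (adjacent cone) and ξ ⇝ C_K(φ(ξ)) (Clarke tangent cone) are Σ-measurable. -/

import Mathlib

open MeasureTheory Metric
open scoped ENNReal

/-- The Clarke tangent cone to `K` at `z`. -/
def clarkeTangentCone {Z : Type*} [NormedAddCommGroup Z] [NormedSpace ℝ Z]
    (K : Set Z) (z : Z) : Set Z :=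
  {v | ∀ ε > (0 : ℝ), ∃ δ > (0 : ℝ), ∀ t : ℝ, 0 < t → t < δ →
    ∀ y ∈ K, ‖y - z‖ < δ → infDist (y + t • v) K < ε * t}

/-- The adjacent tangent cone to `K` at `z`. -/
def adjacentCone {Z : Type*} [NormedAddCommGroup Z] [NormedSpace ℝ Z]
    (K : Set Z) (z : Z) : Set Z :=
  {v | ∀ ε > (0 : ℝ), ∃ δ > (0 : ℝ), ∀ t : ℝ, 0 < t → t < δ →
    infDist (z + t • v) K < ε * t}

/-!
The graphs of both cone maps are Borel in `Z × Z`: once `ε` and `δ` range over the rationals and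
the inequalities are made non-strict, each graph is a countable intersection of countable unions
of closed sets. The set of `ξ` for which `Γ (φ ξ)` meets `B` is the preimage under `φ` of the
projection of a Borel set, which is analytic; analytic sets are measurable for the completion of
every finite Borel measure (Choquet), so their preimages are measurable for the complete
measure `μ`. For `σ : (ℕ → ℕ) → X` continuous, the compact sets
`σ '' {x | ∀ i, x i ≤ b i}` exhaust the measure of `range σ` when the bounds `b i` are chosen one
coordinate at a time by continuity from below: every open neighbourhood of such a set contains
some `σ '' {x | ∀ i < N, x i ≤ b i}`, so outer regularity applies.
-/

open Set

theorem PiNat.exists_cylinder_subset_of_isCompact {E : ℕ → Type*} [∀ n, TopologicalSpace (E n)]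
    [∀ n, DiscreteTopology (E n)] {C V : Set (∀ n, E n)} (hC : IsCompact C) (hV : IsOpen V)
    (hCV : C ⊆ V) : ∃ N, ∀ x ∈ C, cylinder x N ⊆ V := by
  have hW : ∀ n, IsOpen {x | cylinder x n ⊆ V} := fun n ↦ by
    refine isOpen_iff_forall_mem_open.2 fun x hx ↦ ⟨cylinder x n, fun y hy ↦ ?_,
      isOpen_cylinder E x n, self_mem_cylinder x n⟩
    exact (mem_cylinder_iff_eq.1 hy).trans_subset hx
  have hcover : C ⊆ ⋃ n, {x | cylinder x n ⊆ V} := fun x hx ↦ by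
    obtain ⟨_, ⟨y, n, rfl⟩, hxy, hyV⟩ :=
      (isTopologicalBasis_cylinders E).exists_subset_of_mem_open (hCV hx) hV
    exact mem_iUnion.2 ⟨n, (mem_cylinder_iff_eq.1 hxy).trans_subset hyV⟩
  obtain ⟨N, hN⟩ := hC.elim_directed_cover _ hW hcover
    (Monotone.directed_le fun m n hmn x hx ↦ (cylinder_anti x hmn).trans hx)
  exact ⟨N, hN⟩

theorem exists_setOf_forall_lt_le_subset {b : ℕ → ℕ} {V : Set (ℕ → ℕ)} (hV : IsOpen V)
    (hbV : pi univ (fun i ↦ Iic (b i)) ⊆ V) : ∃ N, {x | ∀ i < N, x i ≤ b i} ⊆ V := by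
  obtain ⟨N, hN⟩ := PiNat.exists_cylinder_subset_of_isCompact
    (isCompact_univ_pi fun i ↦ (finite_Iic (b i)).isCompact) hV hbV
  refine ⟨N, fun x hx ↦ hN (fun i ↦ min (x i) (b i)) (fun i _ ↦ min_le_right (x i) (b i)) ?_⟩
  exact fun i hi ↦ (min_eq_left (hx i hi)).symm

theorem exists_lt_measure_image_inter_le {X : Type*} [MeasurableSpace X] (ν : Measure X)
    (σ : (ℕ → ℕ) → X) {S : Set (ℕ → ℕ)} {c : ℝ≥0∞} (hc : c < ν (σ '' S)) (k : ℕ) :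
    ∃ n, c < ν (σ '' (S ∩ {x | x k ≤ n})) := by
  have hS : σ '' S = ⋃ n, σ '' (S ∩ {x | x k ≤ n}) := by
    rw [← image_iUnion, ← inter_iUnion, iUnion_eq_univ_iff.2 fun x ↦ ⟨x k, le_refl (x k)⟩,
      inter_univ]
  have hmono : Monotone fun n ↦ σ '' (S ∩ {x | x k ≤ n}) := fun m n hmn ↦
    image_mono <| inter_subset_inter_right _ fun x hx ↦ le_trans hx hmn
  rw [hS, hmono.measure_iUnion] at hc
  exact lt_iSup_iff.1 hc

theorem exists_forall_lt_measure_image_setOf_le {X : Type*} [MeasurableSpace X] (ν : Measure X)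
    (σ : (ℕ → ℕ) → X) {c : ℝ≥0∞} (hc : c < ν (range σ)) :
    ∃ b : ℕ → ℕ, ∀ k, c < ν (σ '' {x | ∀ i < k, x i ≤ b i}) := by
  choose! n hn using fun (S : Set (ℕ → ℕ)) (k : ℕ) (hS : c < ν (σ '' S)) ↦
    exists_lt_measure_image_inter_le ν σ hS k
  let T : ℕ → Set (ℕ → ℕ) := fun k ↦ Nat.rec univ (fun k Tk ↦ Tk ∩ {x | x k ≤ n Tk k}) k
  have hT : ∀ k, T k = {x | ∀ i < k, x i ≤ n (T i) i} := by
    intro k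
    induction k with
    | zero => simp [T]
    | succ k ih =>
      ext x
      exact (and_congr_left' (Set.ext_iff.1 ih x)).trans Nat.forall_lt_succ_right.symm
  refine ⟨fun i ↦ n (T i) i, fun k ↦ ?_⟩
  rw [← hT]
  induction k with
  | zero => simpa [T] using hc
  | succ k ih => exact hn (T k) k ih

theorem exists_isCompact_subset_range_le_measure {X : Type*} [TopologicalSpace X]
    [MeasurableSpace X] (ν : Measure X) [ν.OuterRegular] {σ : (ℕ → ℕ) → X} (hσ : Continuous σ)
    {c : ℝ≥0∞} (hc : c < ν (range σ)) :
    ∃ K, IsCompact K ∧ K ⊆ range σ ∧ c ≤ ν K := by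
  obtain ⟨b, hb⟩ := exists_forall_lt_measure_image_setOf_le ν σ hc
  let C : Set (ℕ → ℕ) := pi univ fun i ↦ Iic (b i)
  refine ⟨σ '' C, (isCompact_univ_pi fun i ↦ (finite_Iic (b i)).isCompact).image hσ,
    image_subset_range σ C, not_lt.1 fun hlt ↦ ?_⟩
  obtain ⟨U, hCU, hU, hUc⟩ := (σ '' C).exists_isOpen_lt_of_lt c hlt
  obtain ⟨N, hN⟩ := exists_setOf_forall_lt_le_subset (hU.preimage hσ) (image_subset_iff.1 hCU)
  exact (hb N).not_ge <| (measure_mono (image_subset_iff.2 hN)).trans hUc.le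

theorem MeasureTheory.AnalyticSet.nullMeasurableSet {X : Type*} [TopologicalSpace X] [T2Space X]
    [MeasurableSpace X] [OpensMeasurableSpace X] (ν : Measure X) [IsFiniteMeasure ν]
    [ν.OuterRegular] {A : Set X} (hA : AnalyticSet A) : NullMeasurableSet A ν := by
  rw [AnalyticSet] at hA
  obtain rfl | ⟨σ, hσ, rfl⟩ := hA
  · exact nullMeasurableSet_empty
  rcases eq_zero_or_pos (ν (range σ)) with h0 | hpos
  · exact NullMeasurableSet.of_null h0
  obtain ⟨u, -, hu, hlim⟩ := exists_seq_strictMono_tendsto' hpos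
  choose K hK hKσ hνK using fun n ↦ exists_isCompact_subset_range_le_measure ν hσ (hu n).2
  have hF : MeasurableSet (⋃ n, K n) := .iUnion fun n ↦ (hK n).measurableSet
  have hFσ : ν (range σ) ≤ ν (⋃ n, K n) :=
    le_of_tendsto' hlim fun n ↦ (hνK n).trans (measure_mono (subset_iUnion K n))
  exact hF.nullMeasurableSet.congr <| ae_eq_of_subset_of_measure_ge (iUnion_subset hKσ) hFσ
    hF.nullMeasurableSet (measure_ne_top _ _)

theorem MeasureTheory.AnalyticSet.measurableSet_preimage {Ξ X : Type*} [MeasurableSpace Ξ]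
    (μ : Measure Ξ) [IsFiniteMeasure μ] [μ.IsComplete] [TopologicalSpace X]
    [PolishSpace X] [MeasurableSpace X] [BorelSpace X] {φ : Ξ → X} (hφ : Measurable φ)
    {A : Set X} (hA : AnalyticSet A) : MeasurableSet (φ ⁻¹' A) :=
  ((hA.nullMeasurableSet (μ.map φ)).preimage (hφ.measurePreserving μ).quasiMeasurePreserving)
    |>.measurable_of_complete

theorem forall_exists_forall_lt_mul_iff_rat {Y : Type*} {J : ℝ → Set Y} (hJ : Monotone J)
    (g : ℝ → Y → ℝ) :
    (∀ ε > (0 : ℝ), ∃ δ > (0 : ℝ), ∀ t : ℝ, 0 < t → t < δ → ∀ y ∈ J δ, g t y < ε * t) ↔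
      ∀ ε : ℚ, 0 < ε → ∃ δ : ℚ, 0 < δ ∧
        ∀ t : ℝ, 0 < t → t < δ → ∀ y ∈ J δ, g t y ≤ ε * t := by
  refine ⟨fun H ε hε ↦ ?_, fun H ε hε ↦ ?_⟩
  · obtain ⟨δ, hδ, hg⟩ := H ε (Rat.cast_pos.2 hε)
    obtain ⟨δ', hδ'0, hδ'δ⟩ := exists_rat_btwn hδ
    exact ⟨δ', Rat.cast_pos.1 hδ'0, fun t ht htδ' y hy ↦
      (hg t ht (htδ'.trans hδ'δ) y (hJ hδ'δ.le hy)).le⟩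
  · obtain ⟨ε', hε'0, hε'ε⟩ := exists_rat_btwn hε
    obtain ⟨δ, hδ, hg⟩ := H ε' (Rat.cast_pos.1 hε'0)
    exact ⟨δ, Rat.cast_pos.2 hδ, fun t ht htδ y hy ↦
      (hg t ht htδ y hy).trans_lt (mul_lt_mul_of_pos_right hε'ε ht)⟩

section TangentCones

variable {Z : Type*} [NormedAddCommGroup Z] [NormedSpace ℝ Z]

theorem mem_adjacentCone_iff_rat {K : Set Z} {z v : Z} :
    v ∈ adjacentCone K z ↔ ∀ ε : ℚ, 0 < ε → ∃ δ : ℚ, 0 < δ ∧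
      ∀ t : ℝ, 0 < t → t < δ → infDist (z + t • v) K ≤ ε * t := by
  simpa only [adjacentCone, mem_ofPred_eq, mem_singleton_iff, forall_eq] using
    forall_exists_forall_lt_mul_iff_rat (J := fun _ ↦ {z}) monotone_const
      fun t y ↦ infDist (y + t • v) K

theorem mem_clarkeTangentCone_iff_rat {K : Set Z} {z v : Z} :
    v ∈ clarkeTangentCone K z ↔ ∀ ε : ℚ, 0 < ε → ∃ δ : ℚ, 0 < δ ∧
      ∀ t : ℝ, 0 < t → t < δ → ∀ y ∈ K, ‖y - z‖ < δ → infDist (y + t • v) K ≤ ε * t := by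
  simpa only [clarkeTangentCone, mem_ofPred_eq, mem_inter_iff, mem_ball, dist_eq_norm, and_imp]
    using
    forall_exists_forall_lt_mul_iff_rat (J := fun δ ↦ K ∩ ball z δ)
      (fun _ _ h ↦ inter_subset_inter_right _ (ball_subset_ball h))
      fun t y ↦ infDist (y + t • v) K

variable [MeasurableSpace Z] [OpensMeasurableSpace Z] [SecondCountableTopology Z]

theorem measurableSet_adjacentCone_graph (K : Set Z) :
    MeasurableSet {p : Z × Z | p.2 ∈ adjacentCone K p.1} := by
  have hgraph : {p : Z × Z | p.2 ∈ adjacentCone K p.1} =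
      ⋂ (ε : ℚ) (_ : 0 < ε), ⋃ (δ : ℚ) (_ : 0 < δ),
        {p : Z × Z | ∀ t : ℝ, 0 < t → t < δ → infDist (p.1 + t • p.2) K ≤ ε * t} := by
    ext p
    simp only [mem_ofPred_eq, mem_adjacentCone_iff_rat, mem_iInter, mem_iUnion, exists_prop]
  rw [hgraph]
  refine .iInter fun ε ↦ .iInter fun _ ↦ .iUnion fun δ ↦ .iUnion fun _ ↦ IsClosed.measurableSet ?_
  simp only [ofPred_forall]
  exact isClosed_iInter fun t ↦ isClosed_iInter fun _ ↦ isClosed_iInter fun _ ↦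
    isClosed_le (by fun_prop) continuous_const

theorem measurableSet_clarkeTangentCone_graph (K : Set Z) :
    MeasurableSet {p : Z × Z | p.2 ∈ clarkeTangentCone K p.1} := by
  have hgraph : {p : Z × Z | p.2 ∈ clarkeTangentCone K p.1} =
      ⋂ (ε : ℚ) (_ : 0 < ε), ⋃ (δ : ℚ) (_ : 0 < δ), {p : Z × Z | ∀ t : ℝ, 0 < t → t < δ →
        ∀ y ∈ K, ‖y - p.1‖ < δ → infDist (y + t • p.2) K ≤ ε * t} := by
    ext p
    simp only [mem_ofPred_eq, mem_clarkeTangentCone_iff_rat, mem_iInter, mem_iUnion, exists_prop]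
  rw [hgraph]
  refine .iInter fun ε ↦ .iInter fun _ ↦ .iUnion fun δ ↦ .iUnion fun _ ↦ IsClosed.measurableSet ?_
  simp only [ofPred_forall]
  exact isClosed_iInter fun t ↦ isClosed_iInter fun _ ↦ isClosed_iInter fun _ ↦
    isClosed_iInter fun y ↦ isClosed_iInter fun _ ↦ isClosed_imp
      (isOpen_lt (by fun_prop) continuous_const) (isClosed_le (by fun_prop) continuous_const)

end TangentCones

theorem measurableSet_setOf_inter_nonempty_of_measurableSet_graph {Ξ X Y : Type*}
    [MeasurableSpace Ξ] (μ : Measure Ξ) [IsFiniteMeasure μ] [μ.IsComplete]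
    [TopologicalSpace X] [PolishSpace X] [MeasurableSpace X] [BorelSpace X]
    [TopologicalSpace Y] [PolishSpace Y] [MeasurableSpace Y] [BorelSpace Y]
    {Γ : X → Set Y} (hΓ : MeasurableSet {p : X × Y | p.2 ∈ Γ p.1}) {φ : Ξ → X}
    (hφ : Measurable φ) {B : Set Y} (hB : MeasurableSet B) :
    MeasurableSet {ξ | (Γ (φ ξ) ∩ B).Nonempty} := by
  have hproj : {ξ | (Γ (φ ξ) ∩ B).Nonempty} =
      φ ⁻¹' (Prod.fst '' ({p : X × Y | p.2 ∈ Γ p.1} ∩ Prod.snd ⁻¹' B)) := by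
    ext ξ
    simp [Set.Nonempty]
  rw [hproj]
  exact AnalyticSet.measurableSet_preimage μ hφ
    ((hΓ.inter (measurable_snd hB)).analyticSet.image_of_continuous continuous_fst)

theorem tangentCone_setValued_measurable_general
    {Ξ : Type*} [MeasurableSpace Ξ] (μ : Measure Ξ) [IsFiniteMeasure μ]
    (hμ : μ.IsComplete)
    {Z : Type*} [NormedAddCommGroup Z] [NormedSpace ℝ Z] [CompleteSpace Z]
    [TopologicalSpace.SeparableSpace Z] [MeasurableSpace Z] [BorelSpace Z]
    (K : Set Z)
    (φ : Ξ → Z) (hφm : Measurable φ) :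
    (∀ B : Set Z, MeasurableSet B →
        MeasurableSet {ξ | (adjacentCone K (φ ξ) ∩ B).Nonempty}) ∧
    (∀ B : Set Z, MeasurableSet B →
        MeasurableSet {ξ | (clarkeTangentCone K (φ ξ) ∩ B).Nonempty}) := by
  have := hμ
  exact ⟨fun _ hB ↦ measurableSet_setOf_inter_nonempty_of_measurableSet_graph μ
      (measurableSet_adjacentCone_graph K) hφm hB,
    fun _ hB ↦ measurableSet_setOf_inter_nonempty_of_measurableSet_graph μ
      (measurableSet_clarkeTangentCone_graph K) hφm hB⟩

/-- For `φ ∈ L^p` with values a.e. in a closed nonempty set `K` of a separable Banach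
space, the set-valued maps `ξ ⇝ T_K(φ(ξ))` and `ξ ⇝ C_K(φ(ξ))` are measurable. -/
theorem tangentCone_setValued_measurable
    {Ξ : Type*} [MeasurableSpace Ξ] (μ : Measure Ξ) [IsFiniteMeasure μ]
    (hμ : μ.IsComplete)
    {Z : Type*} [NormedAddCommGroup Z] [NormedSpace ℝ Z] [CompleteSpace Z]
    [TopologicalSpace.SeparableSpace Z] [MeasurableSpace Z] [BorelSpace Z]
    (p : ℝ≥0∞) (hp : 1 ≤ p)
    (K : Set Z) (hKcl : IsClosed K) (hKne : K.Nonempty)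
    (φ : Ξ → Z) (hφm : Measurable φ) (hφp : MemLp φ p μ)
    (hφK : ∀ᵐ ξ ∂μ, φ ξ ∈ K) :
    (∀ B : Set Z, MeasurableSet B →
        MeasurableSet {ξ | (adjacentCone K (φ ξ) ∩ B).Nonempty}) ∧
    (∀ B : Set Z, MeasurableSet B →
        MeasurableSet {ξ | (clarkeTangentCone K (φ ξ) ∩ B).Nonempty}) :=
  tangentCone_setValued_measurable_general μ hμ K φ hφm
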